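/- Let X be a process on a probability space that, under a measure P_0, is a stationary Markov chain with respect to its natural filtration F_n = σ(X_0,…,X_n) with constant transition matrix P_0 satisfying P_0(i,j) > 0 for all states i,j. Let P be a probability measure with P ≪ P_0 on σ(X_n : n ∈ ℕ) and with the same initial distribution of X_0. Then there exist F_{n-1}-measurable random stochastic matrices P_n (n ≥ 1) such that X is a Markov chain with transition matrices (P_n) with respect to (F_n) under P, and for every n, dP/dP_0 |_{F_n} = ∏_{k=1}^{n} P_k(X_{k-1}, X_k) / P_0(X_{k-1}, X_k), P_0-almost surely. -/

import Mathlib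

open MeasureTheory Finset

/-- A (real `N × N`) stochastic matrix: nonnegative entries, each row summing to 1. -/
def IsStochasticMatrix {N : ℕ} (P : Matrix (Fin N) (Fin N) ℝ) : Prop :=
  (∀ i j, 0 ≤ P i j) ∧ ∀ i, ∑ j, P i j = 1

/-- The natural filtration `F n = σ(X 0, …, X n)` of a process `X`. -/
noncomputable def natFiltration {Ω : Type*} [m : MeasurableSpace Ω] {N : ℕ}
    (X : ℕ → Ω → Fin N) (hX : ∀ n, Measurable (X n)) : Filtration ℕ m where
  seq n := ⨆ k ∈ Set.Iic n, MeasurableSpace.comap (X k) inferInstance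
  mono' := fun _ _ hab => biSup_mono fun _ hk => le_trans hk hab
  le' := fun _ => iSup₂_le fun k _ => (hX k).comap_le

/-- Indicator (as a real-valued function) of the event `{X n = j}`. -/
def ind {Ω : Type*} {N : ℕ} (X : ℕ → Ω → Fin N) (n : ℕ) (j : Fin N) : Ω → ℝ :=
  fun ω => if X n ω = j then 1 else 0

/-- `X` is a Markov chain under `Q` with respect to the filtration `F`, with
(random, `F (n-1)`-measurable) transition matrices `P n`:
`Q(X n = j | F (n-1)) = P n (X (n-1)) j` a.s. for all `n ≥ 1` and all states `j`. -/
def IsMarkovChainWith {Ω : Type*} [m : MeasurableSpace Ω] {N : ℕ}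
    (Q : Measure Ω) (F : Filtration ℕ m) (X : ℕ → Ω → Fin N)
    (P : ℕ → Ω → Matrix (Fin N) (Fin N) ℝ) : Prop :=
  ∀ n, 1 ≤ n → ∀ j : Fin N,
    Q[ind X n j | F (n - 1)] =ᵐ[Q] fun ω => P n ω (X (n - 1) ω) j

/-- The likelihood-ratio process `Z n = ∏_{k=1}^n P k (X (k-1), X k) / P₀ (X (k-1), X k)`. -/
noncomputable def lr {Ω : Type*} {N : ℕ} (X : ℕ → Ω → Fin N)
    (P : ℕ → Ω → Matrix (Fin N) (Fin N) ℝ) (P₀ : Matrix (Fin N) (Fin N) ℝ)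
    (n : ℕ) (ω : Ω) : ℝ :=
  ∏ k ∈ Finset.Icc 1 n, P k ω (X (k - 1) ω) (X k ω) / P₀ (X (k - 1) ω) (X k ω)

/-! Under `P`, the one-step conditional probabilities along a path,
`P(X₀ = y₀, …, Xₙ₊₁ = yₙ₊₁) / P(X₀ = y₀, …, Xₙ = yₙ)`, form path-dependent transition matrices
for which `X` is a Markov chain, because `Fₙ` is generated by the finitely many disjoint
cylinders `{X₀ = y₀, …, Xₙ = yₙ}`. Under `P₀` the same ratios are the entries of `P₀mat`.
Multiplying the ratios along a path and starting from the common initial law, the `P`-probability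
of a cylinder is its `P₀`-probability times `∏ₖ Pₖ(yₖ₋₁, yₖ) / P₀mat(yₖ₋₁, yₖ)`, which is therefore
the density of `P` with respect to `P₀` on `Fₙ`. -/

lemma IsStochasticMatrix.le_one {N : ℕ} {A : Matrix (Fin N) (Fin N) ℝ}
    (hA : IsStochasticMatrix A) (i j : Fin N) : A i j ≤ 1 :=
  hA.2 i ▸ Finset.single_le_sum (fun j' _ => hA.1 i j') (mem_univ j)

lemma ind_eq_indicator {Ω : Type*} {N : ℕ} (X : ℕ → Ω → Fin N) (n : ℕ) (j : Fin N) :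
    ind X n j = (X n ⁻¹' {j}).indicator 1 := by
  ext ω
  by_cases h : X n ω = j <;> simp [ind, h]

section

variable {Ω : Type*} [MeasurableSpace Ω] {N : ℕ}

lemma setIntegral_ind (Q : Measure Ω) {X : ℕ → Ω → Fin N} (hX : ∀ n, Measurable (X n))
    (s : Set Ω) (n : ℕ) (j : Fin N) : ∫ ω in s, ind X n j ω ∂Q = Q.real (s ∩ X n ⁻¹' {j}) := by
  rw [ind_eq_indicator, setIntegral_indicator (hX n (measurableSet_singleton j))]
  simp

lemma integrable_ind (Q : Measure Ω) [IsFiniteMeasure Q] {X : ℕ → Ω → Fin N}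
    (hX : ∀ n, Measurable (X n)) (n : ℕ) (j : Fin N) : Integrable (ind X n j) Q := by
  rw [ind_eq_indicator]
  exact (integrable_const 1).indicator (hX n (measurableSet_singleton j))

lemma measurable_natFiltration {X : ℕ → Ω → Fin N} (hX : ∀ n, Measurable (X n)) {k n : ℕ}
    (hk : k ≤ n) : Measurable[natFiltration X hX n] (X k) :=
  Measurable.of_comap_le <| le_iSup₂
    (f := fun k (_ : k ∈ Set.Iic n) => MeasurableSpace.comap (X k) inferInstance) k hk

lemma natFiltration_le_comap (X : ℕ → Ω → Fin N) (hX : ∀ n, Measurable (X n)) (n : ℕ) :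
    natFiltration X hX n ≤ MeasurableSpace.comap (fun ω (k : Fin (n + 1)) => X k ω) inferInstance :=
  iSup₂_le fun k hk => by
    simpa [MeasurableSpace.comap_comp, Function.comp_def] using
      MeasurableSpace.comap_mono (g := fun ω (k : Fin (n + 1)) => X k ω)
        (measurable_pi_apply (⟨k, Nat.lt_succ_of_le hk⟩ : Fin (n + 1))).comap_le

lemma measurable_natFiltration_of_dependsOn {X : ℕ → Ω → Fin N} (hX : ∀ n, Measurable (X n))
    {n : ℕ} {β : Type*} [MeasurableSpace β] {f : (ℕ → Fin N) → β} (hf : DependsOn f (Set.Iic n)) :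
    Measurable[natFiltration X hX n] fun ω => f fun k => X k ω := by
  have hpath : Measurable[natFiltration X hX n] fun ω (k : Fin (n + 1)) => X k ω :=
    @measurable_pi_lambda _ _ _ (natFiltration X hX n) _ _
      fun k => measurable_natFiltration hX (Nat.lt_succ_iff.mp k.isLt)
  have hfactor : (fun ω => f fun k => X k ω) =
      (fun v : Fin (n + 1) → Fin N => f fun k => v (Fin.clamp k n)) ∘ fun ω k => X k ω := by
    ext ω
    exact hf fun k hk => by simp [Fin.clamp, Nat.min_eq_left (Set.mem_Iic.mp hk)]
  rw [hfactor]
  exact Measurable.of_discrete.comp hpath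

lemma exists_finset_eq_preimage {X : ℕ → Ω → Fin N} {hX : ∀ n, Measurable (X n)} {n : ℕ}
    {s : Set Ω} (hs : MeasurableSet[natFiltration X hX n] s) :
    ∃ V : Finset (Fin (n + 1) → Fin N), s = (fun ω (k : Fin (n + 1)) => X k ω) ⁻¹' V := by
  classical
  obtain ⟨S, -, rfl⟩ := natFiltration_le_comap X hX n s hs
  exact ⟨S.toFinset, by rw [Set.coe_toFinset]⟩

end

section

variable {Ω : Type*} {N : ℕ}

def cyl (X : ℕ → Ω → Fin N) (n : ℕ) (y : ℕ → Fin N) : Set Ω := {ω | ∀ k ≤ n, X k ω = y k}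

variable {X : ℕ → Ω → Fin N}

lemma dependsOn_cyl (n : ℕ) : DependsOn (cyl X n) (Set.Iic n) := fun y z h => by
  ext ω
  exact forall₂_congr fun k hk => by rw [h k hk]

lemma cyl_zero (y : ℕ → Fin N) : cyl X 0 y = X 0 ⁻¹' {y 0} := by
  ext ω
  simp [cyl]

lemma cyl_succ (n : ℕ) (y : ℕ → Fin N) :
    cyl X (n + 1) y = cyl X n y ∩ X (n + 1) ⁻¹' {y (n + 1)} := by
  ext ω
  simp only [cyl, Set.mem_inter_iff, Set.mem_preimage, Set.mem_singleton_iff,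
    Nat.le_succ_iff_eq_or_le]
  grind

lemma cyl_succ_subset (n : ℕ) (y : ℕ → Fin N) : cyl X (n + 1) y ⊆ cyl X n y := by
  rw [cyl_succ]
  exact Set.inter_subset_left

lemma cyl_update_succ (n : ℕ) (y : ℕ → Fin N) (j : Fin N) :
    cyl X n (Function.update y (n + 1) j) = cyl X n y :=
  dependsOn_cyl n fun k hk => Function.update_of_ne (by simp at hk; omega) _ _

lemma preimage_pathUpTo_singleton (n : ℕ) (v : Fin (n + 1) → Fin N) :
    (fun ω (k : Fin (n + 1)) => X k ω) ⁻¹' {v} = cyl X n fun k => v (Fin.clamp k n) := by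
  ext ω
  simp only [Set.mem_preimage, Set.mem_singleton_iff, cyl, funext_iff]
  constructor
  · rintro h k hk
    rw [← h]
    simp [Fin.clamp, Nat.min_eq_left hk]
  · intro h k
    simpa [Fin.clamp, Nat.min_eq_left (Nat.lt_succ_iff.mp k.isLt)] using
      h k (Nat.lt_succ_iff.mp k.isLt)

variable [MeasurableSpace Ω] (hX : ∀ n, Measurable (X n))
include hX

lemma measurableSet_cyl (n : ℕ) (y : ℕ → Fin N) :
    MeasurableSet[natFiltration X hX n] (cyl X n y) := by
  have h : cyl X n y = ⋂ k ∈ Set.Iic n, X k ⁻¹' {y k} := by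
    ext ω; simp [cyl]
  rw [h]
  exact .biInter (Set.to_countable _) fun k hk =>
    measurable_natFiltration hX hk (measurableSet_singleton _)

lemma measurableSet_preimage_pathUpTo_singleton (n : ℕ) (v : Fin (n + 1) → Fin N) :
    MeasurableSet ((fun ω (k : Fin (n + 1)) => X k ω) ⁻¹' {v}) := by
  rw [preimage_pathUpTo_singleton]
  exact (natFiltration X hX).le n _ (measurableSet_cyl hX n _)

lemma measure_eq_of_forall_cyl {μ ν : Measure Ω} {n : ℕ}
    (h : ∀ y, μ (cyl X n y) = ν (cyl X n y)) {s : Set Ω}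
    (hs : MeasurableSet[natFiltration X hX n] s) : μ s = ν s := by
  obtain ⟨V, rfl⟩ := exists_finset_eq_preimage hs
  have hfib := fun v (_ : v ∈ V) => measurableSet_preimage_pathUpTo_singleton hX n v
  simp only [← sum_measure_preimage_singleton V hfib, preimage_pathUpTo_singleton, h]

lemma setIntegral_eq_of_forall_cyl {μ : Measure Ω} {n : ℕ} {f g : Ω → ℝ}
    (hf : Integrable f μ) (hg : Integrable g μ)
    (h : ∀ y, ∫ ω in cyl X n y, f ω ∂μ = ∫ ω in cyl X n y, g ω ∂μ) {s : Set Ω}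
    (hs : MeasurableSet[natFiltration X hX n] s) : ∫ ω in s, f ω ∂μ = ∫ ω in s, g ω ∂μ := by
  obtain ⟨V, rfl⟩ := exists_finset_eq_preimage hs
  have hfib := fun v (_ : v ∈ V) => measurableSet_preimage_pathUpTo_singleton hX n v
  rw [← Finset.set_biUnion_preimage_singleton,
    integral_biUnion_finset V hfib (Set.pairwiseDisjoint_fiber _ _) fun _ _ => hf.integrableOn,
    integral_biUnion_finset V hfib (Set.pairwiseDisjoint_fiber _ _) fun _ _ => hg.integrableOn]
  simp only [preimage_pathUpTo_singleton, h]

end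

section

variable {Ω : Type*} [MeasurableSpace Ω] {N : ℕ} {X : ℕ → Ω → Fin N}
  (Q : Measure Ω) (A : Matrix (Fin N) (Fin N) ℝ)

-- On a `Q`-null cylinder the value is irrelevant; falling back to `A` keeps the rows stochastic.
noncomputable def stepProb (X : ℕ → Ω → Fin N) (n : ℕ) (y : ℕ → Fin N) : ℝ :=
  if Q.real (cyl X n y) = 0 then A (y n) (y (n + 1))
  else Q.real (cyl X (n + 1) y) / Q.real (cyl X n y)

noncomputable def transMat (X : ℕ → Ω → Fin N) (n : ℕ) (ω : Ω) : Matrix (Fin N) (Fin N) ℝ :=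
  Matrix.of fun i j =>
    stepProb Q A X n (Function.update (Function.update (fun k => X k ω) n i) (n + 1) j)

noncomputable def pathLR (X : ℕ → Ω → Fin N) (n : ℕ) (y : ℕ → Fin N) : ℝ :=
  ∏ k ∈ Icc 1 n, stepProb Q A X (k - 1) y / A (y (k - 1)) (y k)

lemma dependsOn_stepProb (n : ℕ) : DependsOn (stepProb Q A X n) (Set.Iic (n + 1)) :=
  fun y z h => by
    have hle := fun k (hk : k ∈ Set.Iic n) => h k (Set.mem_Iic.mpr (Nat.le_succ_of_le hk))
    simp only [stepProb, dependsOn_cyl n hle, dependsOn_cyl (n + 1) h,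
      h n (by simp), h (n + 1) (by simp)]

lemma dependsOn_pathLR (n : ℕ) : DependsOn (pathLR Q A X n) (Set.Iic n) := fun y z h =>
  Finset.prod_congr rfl fun k hk => by
    have hk := Finset.mem_Icc.mp hk
    rw [dependsOn_stepProb Q A (k - 1) fun i hi => h i (by simp at hi ⊢; omega),
      h k (by simpa using hk.2), h (k - 1) (by simp; omega)]

lemma transMat_apply_self (n : ℕ) (ω : Ω) (j : Fin N) :
    transMat Q A X n ω (X n ω) j =
      stepProb Q A X n (Function.update (fun k => X k ω) (n + 1) j) := by
  simp only [transMat, Matrix.of_apply]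
  rw [Function.update_eq_self n fun k => X k ω]

lemma transMat_apply_self_succ (n : ℕ) (ω : Ω) :
    transMat Q A X n ω (X n ω) (X (n + 1) ω) = stepProb Q A X n fun k => X k ω := by
  rw [transMat_apply_self, Function.update_eq_self (n + 1) fun k => X k ω]

lemma lr_transMat (n : ℕ) (ω : Ω) :
    lr X (fun n => transMat Q A X (n - 1)) A n ω = pathLR Q A X n fun k => X k ω :=
  Finset.prod_congr rfl fun k hk => by
    obtain ⟨l, rfl⟩ := Nat.exists_eq_add_of_le' (Finset.mem_Icc.mp hk).1
    simp only [Nat.add_sub_cancel, transMat_apply_self_succ]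

lemma stepProb_nonneg (hA : ∀ i j, 0 ≤ A i j) (n : ℕ) (y : ℕ → Fin N) :
    0 ≤ stepProb Q A X n y := by
  unfold stepProb
  split_ifs
  exacts [hA _ _, div_nonneg measureReal_nonneg measureReal_nonneg]

lemma pathLR_nonneg (hA : ∀ i j, 0 ≤ A i j) (n : ℕ) (y : ℕ → Fin N) : 0 ≤ pathLR Q A X n y :=
  Finset.prod_nonneg fun _ _ => div_nonneg (stepProb_nonneg Q A hA _ _) (hA _ _)

lemma pathLR_succ (n : ℕ) (y : ℕ → Fin N) :
    pathLR Q A X (n + 1) y = pathLR Q A X n y * (stepProb Q A X n y / A (y n) (y (n + 1))) := by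
  rw [pathLR, Finset.prod_Icc_succ_top (by omega), Nat.add_sub_cancel, pathLR]

variable [IsFiniteMeasure Q]

lemma stepProb_le_one (hA : IsStochasticMatrix A) (n : ℕ) (y : ℕ → Fin N) :
    stepProb Q A X n y ≤ 1 := by
  unfold stepProb
  split_ifs with h
  · exact hA.le_one _ _
  · exact div_le_one_of_le₀ (measureReal_mono (cyl_succ_subset n y)) measureReal_nonneg

lemma measureReal_cyl_succ (n : ℕ) (y : ℕ → Fin N) :
    Q.real (cyl X (n + 1) y) = stepProb Q A X n y * Q.real (cyl X n y) := by
  unfold stepProb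
  split_ifs with h
  · rw [h, mul_zero]
    exact le_antisymm (h ▸ measureReal_mono (cyl_succ_subset n y)) measureReal_nonneg
  · rw [div_mul_cancel₀ _ h]

variable (hX : ∀ n, Measurable (X n))
include hX

lemma measureReal_cyl_eq_sum (n : ℕ) (y : ℕ → Fin N) :
    Q.real (cyl X n y) = ∑ j, Q.real (cyl X (n + 1) (Function.update y (n + 1) j)) := by
  have hcyl : ∀ j,
      cyl X (n + 1) (Function.update y (n + 1) j) = X (n + 1) ⁻¹' {j} ∩ cyl X n y := fun j => by
    rw [cyl_succ, Set.inter_comm, Function.update_self, cyl_update_succ]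
  simp only [hcyl, ← measureReal_restrict_apply (hX (n + 1) (measurableSet_singleton _))]
  rw [sum_measureReal_preimage_singleton _ fun j _ => hX (n + 1) (measurableSet_singleton j)]
  simp [measureReal_restrict_apply MeasurableSet.univ]

lemma sum_stepProb_update (hA : IsStochasticMatrix A) (n : ℕ) (y : ℕ → Fin N) :
    ∑ j, stepProb Q A X n (Function.update y (n + 1) j) = 1 := by
  by_cases h : Q.real (cyl X n y) = 0
  · simp [stepProb, cyl_update_succ, h, hA.2]
  · simp only [stepProb, cyl_update_succ, if_neg h, ← Finset.sum_div, ← measureReal_cyl_eq_sum Q hX]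
    exact div_self h

end

section

variable {Ω : Type*} [MeasurableSpace Ω] {N : ℕ} {X : ℕ → Ω → Fin N}
  (Q : Measure Ω) (A : Matrix (Fin N) (Fin N) ℝ)

lemma dependsOn_stepProb_update (n : ℕ) (j : Fin N) :
    DependsOn (fun y => stepProb Q A X n (Function.update y (n + 1) j)) (Set.Iic n) :=
  fun y z h => dependsOn_stepProb Q A n fun k hk => by
    rcases eq_or_ne k (n + 1) with rfl | hne
    · simp
    · simp only [Function.update_of_ne hne]
      exact h k (by simp at hk ⊢; omega)

variable (hX : ∀ n, Measurable (X n))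
include hX

lemma measurable_transMat_apply (n : ℕ) (i j : Fin N) :
    Measurable[natFiltration X hX n] fun ω => transMat Q A X n ω i j :=
  measurable_natFiltration_of_dependsOn hX
    (f := fun y => stepProb Q A X n (Function.update (Function.update y n i) (n + 1) j))
    fun y z h => dependsOn_stepProb_update Q A n j fun k hk => by
      rcases eq_or_ne k n with rfl | hne
      · simp
      · simp only [Function.update_of_ne hne]
        exact h k hk

lemma condExp_ind_eq_transMat [IsFiniteMeasure Q] (hA : IsStochasticMatrix A) (n : ℕ)
    (j : Fin N) :
    Q[ind X (n + 1) j | natFiltration X hX n] =ᵐ[Q] fun ω => transMat Q A X n ω (X n ω) j := by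
  simp only [transMat_apply_self]
  set g := fun ω => stepProb Q A X n (Function.update (fun k => X k ω) (n + 1) j)
  have hgm : Measurable[natFiltration X hX n] g :=
    measurable_natFiltration_of_dependsOn hX (dependsOn_stepProb_update Q A n j)
  have hg_int : Integrable g Q :=
    .of_bound (hgm.mono ((natFiltration X hX).le n) le_rfl).aestronglyMeasurable 1
      (.of_forall fun ω => by
        rw [Real.norm_eq_abs, abs_of_nonneg (stepProb_nonneg Q A hA.1 _ _)]
        exact stepProb_le_one Q A hA _ _)
  refine (ae_eq_condExp_of_forall_setIntegral_eq ((natFiltration X hX).le n)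
    (integrable_ind Q hX _ j) (fun _ _ _ => hg_int.integrableOn)
    (fun s hs _ =>
      setIntegral_eq_of_forall_cyl hX hg_int (integrable_ind Q hX _ j) (fun y => ?_) hs)
    hgm.aestronglyMeasurable).symm
  have hC := (natFiltration X hX).le n _ (measurableSet_cyl hX n y)
  calc ∫ ω in cyl X n y, g ω ∂Q
      = ∫ ω in cyl X n y, stepProb Q A X n (Function.update y (n + 1) j) ∂Q :=
        setIntegral_congr_fun hC fun ω hω => dependsOn_stepProb_update Q A n j hω
    _ = stepProb Q A X n (Function.update y (n + 1) j) *
          Q.real (cyl X n (Function.update y (n + 1) j)) := by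
        rw [setIntegral_const, smul_eq_mul, mul_comm, cyl_update_succ]
    _ = ∫ ω in cyl X n y, ind X (n + 1) j ω ∂Q := by
        rw [← measureReal_cyl_succ, setIntegral_ind Q hX, cyl_succ, Function.update_self,
          cyl_update_succ]

lemma isMarkovChainWith_transMat [IsFiniteMeasure Q] (hA : IsStochasticMatrix A) :
    IsMarkovChainWith Q (natFiltration X hX) X fun n => transMat Q A X (n - 1) := by
  intro n hn j
  obtain ⟨n, rfl⟩ := Nat.exists_eq_add_of_le' hn
  simpa using condExp_ind_eq_transMat Q A hX hA n j

lemma measureReal_cyl_succ_of_isMarkovChainWith [IsFiniteMeasure Q]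
    (hM : IsMarkovChainWith Q (natFiltration X hX) X fun _ _ => A) (n : ℕ) (y : ℕ → Fin N) :
    Q.real (cyl X (n + 1) y) = A (y n) (y (n + 1)) * Q.real (cyl X n y) := by
  have hC := (natFiltration X hX).le n _ (measurableSet_cyl hX n y)
  calc Q.real (cyl X (n + 1) y)
      = ∫ ω in cyl X n y, ind X (n + 1) (y (n + 1)) ω ∂Q := by
        rw [setIntegral_ind Q hX, cyl_succ]
    _ = ∫ ω in cyl X n y, (Q[ind X (n + 1) (y (n + 1)) | natFiltration X hX n]) ω ∂Q :=
        (setIntegral_condExp _ (integrable_ind Q hX _ _) (measurableSet_cyl hX n y)).symm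
    _ = ∫ ω in cyl X n y, A (X n ω) (y (n + 1)) ∂Q :=
        setIntegral_congr_ae hC ((hM (n + 1) n.succ_pos _).mono fun ω hω _ => hω)
    _ = ∫ ω in cyl X n y, A (y n) (y (n + 1)) ∂Q :=
        setIntegral_congr_fun hC fun ω hω => by rw [hω n le_rfl]
    _ = A (y n) (y (n + 1)) * Q.real (cyl X n y) := by
        rw [setIntegral_const, smul_eq_mul, mul_comm]

end

section

variable {Ω : Type*} [MeasurableSpace Ω] {N : ℕ} {X : ℕ → Ω → Fin N}
  {P P₀ : Measure Ω} [IsFiniteMeasure P] [IsFiniteMeasure P₀] {A : Matrix (Fin N) (Fin N) ℝ}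

variable (hX : ∀ n, Measurable (X n)) (hA : ∀ i j, 0 < A i j)
  (hM : IsMarkovChainWith P₀ (natFiltration X hX) X fun _ _ => A)
  (hInit : P.map (X 0) = P₀.map (X 0))
include hX hA hM hInit

lemma measureReal_cyl_eq_pathLR_mul (n : ℕ) (y : ℕ → Fin N) :
    P.real (cyl X n y) = pathLR P A X n y * P₀.real (cyl X n y) := by
  induction n with
  | zero =>
    rw [pathLR, Finset.Icc_eq_empty (by omega), Finset.prod_empty, one_mul, cyl_zero,
      measureReal_def, measureReal_def, ← Measure.map_apply (hX 0) (measurableSet_singleton _),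
      hInit, Measure.map_apply (hX 0) (measurableSet_singleton _)]
  | succ n ih =>
    rw [measureReal_cyl_succ P A, ih, measureReal_cyl_succ_of_isMarkovChainWith P₀ A hX hM,
      pathLR_succ P A]
    field_simp [(hA (y n) (y (n + 1))).ne']

lemma measure_eq_setLIntegral_lr (n : ℕ) {s : Set Ω}
    (hs : MeasurableSet[natFiltration X hX n] s) :
    P s = ∫⁻ ω in s, ENNReal.ofReal (lr X (fun n => transMat P A X (n - 1)) A n ω) ∂P₀ := by
  rw [← withDensity_apply _ ((natFiltration X hX).le n _ hs)]
  refine measure_eq_of_forall_cyl hX (fun y => ?_) hs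
  have hC := (natFiltration X hX).le n _ (measurableSet_cyl hX n y)
  rw [withDensity_apply _ hC,
    setLIntegral_congr_fun hC fun ω hω => by rw [lr_transMat, dependsOn_pathLR P A n hω],
    setLIntegral_const, ← ofReal_measureReal, ← ofReal_measureReal,
    ← ENNReal.ofReal_mul (pathLR_nonneg P A (fun i j => (hA i j).le) n y),
    measureReal_cyl_eq_pathLR_mul hX hA hM hInit]

end

theorem discrete_girsanov_necessity_general
    {Ω : Type*} [m : MeasurableSpace Ω] {N : ℕ}
    (X : ℕ → Ω → Fin N) (hX : ∀ n, Measurable (X n))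
    (P P₀ : Measure Ω) [IsProbabilityMeasure P] [IsProbabilityMeasure P₀]
    (P₀mat : Matrix (Fin N) (Fin N) ℝ)
    (hP₀_stoch : IsStochasticMatrix P₀mat)
    (hP₀_pos : ∀ i j, 0 < P₀mat i j)
    (hMarkov₀ : IsMarkovChainWith P₀ (natFiltration X hX) X fun _ _ => P₀mat)
    (hInit : P.map (X 0) = P₀.map (X 0)) :
    ∃ Pn : ℕ → Ω → Matrix (Fin N) (Fin N) ℝ,
      (∀ n, 1 ≤ n → ∀ i j,
        Measurable[(natFiltration X hX) (n - 1)] fun ω => Pn n ω i j) ∧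
      (∀ n, 1 ≤ n → ∀ ω, IsStochasticMatrix (Pn n ω)) ∧
      IsMarkovChainWith P (natFiltration X hX) X Pn ∧
      ∀ n : ℕ, ∀ s : Set Ω, MeasurableSet[(natFiltration X hX) n] s →
        P s = ∫⁻ ω in s, ENNReal.ofReal (lr X Pn P₀mat n ω) ∂P₀ :=
  ⟨fun n => transMat P P₀mat X (n - 1),
    fun n _ i j => measurable_transMat_apply P P₀mat hX (n - 1) i j,
    fun n hn ω => by
      obtain ⟨n, rfl⟩ := Nat.exists_eq_add_of_le' hn
      exact ⟨fun i j => stepProb_nonneg P P₀mat hP₀_stoch.1 _ _,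
        fun i => sum_stepProb_update P P₀mat hX hP₀_stoch _ _⟩,
    isMarkovChainWith_transMat P P₀mat hX hP₀_stoch,
    fun n _ hs => measure_eq_setLIntegral_lr hX hP₀_pos hMarkov₀ hInit n hs⟩

/-- If `X` is, under `P₀`, a stationary Markov chain with respect to its
natural filtration with constant transition matrix `P₀mat` having strictly positive entries,
and `P` is a probability measure with `P ≪ P₀` on `σ(X n : n ∈ ℕ)` and the same initial
distribution, then there exist `F (n-1)`-measurable random stochastic matrices `Pn n` such
that `X` is a Markov chain with transition matrices `Pn` under `P`, and for every `n` the
density of `P` with respect to `P₀` on `F n` is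
`∏_{k=1}^n Pn k (X (k-1), X k) / P₀mat (X (k-1), X k)`. -/
theorem discrete_girsanov_necessity
    {Ω : Type*} [m : MeasurableSpace Ω] {N : ℕ} (hN : 1 ≤ N)
    (X : ℕ → Ω → Fin N) (hX : ∀ n, Measurable (X n))
    (P P₀ : Measure Ω) [IsProbabilityMeasure P] [IsProbabilityMeasure P₀]
    (P₀mat : Matrix (Fin N) (Fin N) ℝ)
    (hP₀_stoch : IsStochasticMatrix P₀mat)
    (hP₀_pos : ∀ i j, 0 < P₀mat i j)
    (hMarkov₀ : IsMarkovChainWith P₀ (natFiltration X hX) X fun _ _ => P₀mat)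
    (hInit : P.map (X 0) = P₀.map (X 0))
    (hAC : P.trim (show (⨆ n, ((natFiltration X hX) n : MeasurableSpace Ω)) ≤ m from
        iSup_le fun n => (natFiltration X hX).le n) ≪
      P₀.trim (show (⨆ n, ((natFiltration X hX) n : MeasurableSpace Ω)) ≤ m from
        iSup_le fun n => (natFiltration X hX).le n)) :
    ∃ Pn : ℕ → Ω → Matrix (Fin N) (Fin N) ℝ,
      (∀ n, 1 ≤ n → ∀ i j,
        Measurable[(natFiltration X hX) (n - 1)] fun ω => Pn n ω i j) ∧
      (∀ n, 1 ≤ n → ∀ ω, IsStochasticMatrix (Pn n ω)) ∧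
      IsMarkovChainWith P (natFiltration X hX) X Pn ∧
      ∀ n : ℕ, ∀ s : Set Ω, MeasurableSet[(natFiltration X hX) n] s →
        P s = ∫⁻ ω in s, ENNReal.ofReal (lr X Pn P₀mat n ω) ∂P₀ :=
  discrete_girsanov_necessity_general (m := m) X hX P P₀ P₀mat hP₀_stoch hP₀_pos hMarkov₀ hInit
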